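/- arXiv:2401.08942 — 2 statements merged into one kernel-verified Lean document; each statement's English description precedes it below -/
import Mathlib

section
/- For n ∈ {2, 3}, every edge-coloring of K_N with N = ⌊5n/2⌋ in the class 𝓑_3(N) contains a monochromatic copy of the kipas K̂_n, and there exists an edge-coloring of K_{⌊5n/2⌋−1} in 𝓑_3(⌊5n/2⌋−1) with no monochromatic K̂_n; hence b_3(K̂_n) = ⌊5n/2⌋. -/
/-
Upper bound: one part of the bipartition has at least `n + 1` vertices. If it spans an edge
`uv` of color `1`, then for two vertices `b, b'` of the other part, `b u b'` is a path with hub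
`v` in color `1`, a `K̂₃ ⊇ K̂₂`. Otherwise that part is a monochromatic `K_{n+1} ⊇ K̂ₙ`.

Lower bound: split `2n` vertices into halves of size `n`, colored `3` and `2` inside and `1`
across. Color `1` is bipartite, while `K̂ₙ` contains a triangle, and colors `2` and `3` each
span only `n < n + 1` vertices.
-/

open SimpleGraph Finset

/-- The kipas `K̂ₙ`: a path on the vertices `0, …, n-1` together with the hub `n`
joined to every path vertex. -/
def kipas (n : ℕ) : SimpleGraph (Fin (n+1)) :=
  SimpleGraph.fromRel (fun u v => (u.val + 1 = v.val ∧ v.val < n) ∨ (u.val < n ∧ v.val = n))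

/-- A monochromatic copy (in color `c`) of the graph `H` in an edge-coloring `χ`
of the complete graph on `V`. -/
def HasMonoCopy {α V C : Type*} (H : SimpleGraph α) (χ : V → V → C) (c : C) : Prop :=
  ∃ f : α ↪ V, ∀ a b, H.Adj a b → χ (f a) (f b) = c

/-- A rainbow copy of the graph `G` in an edge-coloring `χ` of the complete graph on `V`:
distinct edges of the copy receive distinct colors. -/
def HasRainbowCopy {α V C : Type*} (G : SimpleGraph α) (χ : V → V → C) : Prop :=
  ∃ f : α ↪ V, ∀ a b a' b', G.Adj a b → G.Adj a' b' →
    χ (f a) (f b) = χ (f a') (f b') → s(a, b) = s(a', b')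

/-- An edge-coloring uses exactly the colors `1, …, k`. -/
def UsesExactly {V : Type*} (k : ℕ) (χ : V → V → ℕ) : Prop :=
  (∀ u v, u ≠ v → χ u v ∈ Finset.Icc 1 k) ∧
    ∀ c ∈ Finset.Icc 1 k, ∃ u v, u ≠ v ∧ χ u v = c

/-- `grProp G H k N` : every symmetric edge-coloring of `K_{n'}` with `n' ≥ N` using exactly
`k` colors contains a rainbow copy of `G` or a monochromatic copy of `H`. -/
def grProp {α β : Type*} (G : SimpleGraph α) (H : SimpleGraph β) (k N : ℕ) : Prop :=
  ∀ n, N ≤ n → ∀ χ : Fin n → Fin n → ℕ, (∀ u v, χ u v = χ v u) →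
    UsesExactly k χ → HasRainbowCopy G χ ∨ ∃ c, HasMonoCopy H χ c

/-- A monochromatic (color `c`) linear forest, all of whose components are paths on at
least `t` vertices, with at least `m` edges in total. -/
def HasMonoLinearForest {V C : Type*} (χ : V → V → C) (c : C) (t m : ℕ) : Prop :=
  ∃ paths : List (List V),
    paths.flatten.Nodup ∧
    (∀ p ∈ paths, t ≤ p.length) ∧
    (∀ p ∈ paths, p.Chain' (fun u v => χ u v = c)) ∧
    m ≤ (paths.map (fun p => p.length - 1)).sum


/-- The class `𝓑₃(N)` of 3-edge-colorings of `K_N` (colors `1, 2, 3`): the vertices split into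
two parts `A` and `B = Aᶜ`, each of size at least `2`; edges between `A` and `B` have color `1`,
edges inside `A` have color `1` or `3`, and edges inside `B` have color `1` or `2`. -/
def B3Coloring {N : ℕ} (χ : Fin N → Fin N → ℕ) : Prop :=
  ∃ A : Finset (Fin N), 2 ≤ A.card ∧ 2 ≤ Aᶜ.card ∧
    (∀ u ∈ A, ∀ v ∈ Aᶜ, χ u v = 1) ∧
    (∀ u ∈ A, ∀ v ∈ A, u ≠ v → χ u v = 1 ∨ χ u v = 3) ∧
    (∀ u ∈ Aᶜ, ∀ v ∈ Aᶜ, u ≠ v → χ u v = 1 ∨ χ u v = 2)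

section MonoCopy

variable {α β V C : Type*} {χ : V → V → C} {c : C}

lemma HasMonoCopy.of_isContained {G : SimpleGraph α} {H : SimpleGraph β} (hGH : G ⊑ H)
    (h : HasMonoCopy H χ c) : HasMonoCopy G χ c := by
  obtain ⟨φ⟩ := hGH
  obtain ⟨f, hf⟩ := h
  exact ⟨⟨f ∘ φ, f.injective.comp φ.injective⟩, fun a b hab => hf _ _ (φ.toHom.map_adj hab)⟩

lemma hasMonoCopy_top_of_le_card {m : ℕ} {s : Finset V} (hs : m ≤ #s)
    (h : ∀ u ∈ s, ∀ v ∈ s, u ≠ v → χ u v = c) :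
    HasMonoCopy (⊤ : SimpleGraph (Fin m)) χ c := by
  let f : Fin m ↪ V :=
    (Fin.castLEEmb hs).trans (s.equivFin.symm.toEmbedding.trans (Function.Embedding.subtype _))
  refine ⟨f, fun a b hab => h _ ?_ _ ?_ (f.injective.ne hab)⟩ <;> simp [f]

end MonoCopy

section Kipas

lemma kipas_isContained_top (n : ℕ) : kipas n ⊑ (⊤ : SimpleGraph (Fin (n + 1))) := .of_le le_top

lemma kipas_two_isContained_kipas_three : kipas 2 ⊑ kipas 3 :=
  ⟨⟨⟨Fin.succ, fun {a b} hab => by fin_cases a <;> fin_cases b <;> simp_all [kipas]⟩,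
    Fin.succ_injective _⟩⟩

lemma kipas_adj_last {n : ℕ} (i : Fin n) : (kipas n).Adj i.castSucc (Fin.last n) := by
  simp [kipas, Fin.ext_iff, i.isLt.ne]

lemma exists_kipas_adj {n : ℕ} (hn : 1 ≤ n) (a : Fin (n + 1)) : ∃ b, (kipas n).Adj a b := by
  by_cases ha : a = Fin.last n
  · exact ⟨(⟨0, hn⟩ : Fin n).castSucc, ha ▸ (kipas_adj_last _).symm⟩
  · exact ⟨Fin.last n, by simpa using kipas_adj_last (a.castPred ha)⟩

lemma kipas_adj_zero_one {n : ℕ} (hn : 2 ≤ n) :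
    (kipas n).Adj ⟨0, by omega⟩ ⟨1, by omega⟩ := by
  simp [kipas, Fin.ext_iff]; omega

variable {V : Type*} {χ : V → V → ℕ} {c : ℕ}

-- `K̂₃` is `K₄` minus the edge `wy`: path `w x y`, hub `z`.
lemma hasMonoCopy_kipas_three (hsym : ∀ u v, χ u v = χ v u) {w x y z : V}
    (hwxyz : [w, x, y, z].Nodup) (hwx : χ w x = c) (hxy : χ x y = c) (hwz : χ w z = c)
    (hxz : χ x z = c) (hyz : χ y z = c) : HasMonoCopy (kipas 3) χ c := by
  refine ⟨⟨![w, x, y, z], fun i j hij => ?_⟩, fun a b hab => ?_⟩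
  · fin_cases i <;> fin_cases j <;> simp_all
  · change χ (![w, x, y, z] a) (![w, x, y, z] b) = c
    fin_cases a <;> fin_cases b <;> simp_all [kipas]

end Kipas

section UpperBound

variable {V : Type*} {χ : V → V → ℕ}

lemma exists_hasMonoCopy_kipas_of_part (hsym : ∀ u v, χ u v = χ v u) {n : ℕ}
    (hn : n = 2 ∨ n = 3) {P Q : Finset V} (hPQ : Disjoint P Q) (hQ : 2 ≤ #Q)
    (hcross : ∀ x ∈ P, ∀ y ∈ Q, χ x y = 1) (hP : n + 1 ≤ #P) {d : ℕ}
    (hin : ∀ u ∈ P, ∀ v ∈ P, u ≠ v → χ u v = 1 ∨ χ u v = d) :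
    ∃ c, HasMonoCopy (kipas n) χ c := by
  by_cases hone : ∃ u ∈ P, ∃ v ∈ P, u ≠ v ∧ χ u v = 1
  · obtain ⟨u, hu, v, hv, huv, h⟩ := hone
    obtain ⟨b, hb, b', hb', hbb'⟩ := one_lt_card.mp hQ
    have hne := disjoint_iff_ne.mp hPQ
    have hnd : [b, u, b', v].Nodup := by
      simp [hbb', huv, (hne u hu b hb).symm, hne u hu b' hb', (hne v hv b hb).symm,
        (hne v hv b' hb').symm]
    have hkipas : kipas n ⊑ kipas 3 := by
      rcases hn with rfl | rfl
      exacts [kipas_two_isContained_kipas_three, .rfl]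
    exact ⟨1, .of_isContained hkipas <| hasMonoCopy_kipas_three hsym hnd
      ((hsym b u).trans (hcross u hu b hb)) (hcross u hu b' hb')
      ((hsym b v).trans (hcross v hv b hb)) h ((hsym b' v).trans (hcross v hv b' hb'))⟩
  · push Not at hone
    exact ⟨d, .of_isContained (kipas_isContained_top n) <|
      hasMonoCopy_top_of_le_card hP fun u hu v hv huv =>
        (hin u hu v hv huv).resolve_left (hone u hu v hv huv)⟩

theorem B3Coloring.exists_hasMonoCopy_kipas {M n : ℕ} (hn : n = 2 ∨ n = 3)
    (hM : 2 * n + 1 ≤ M) {χ : Fin M → Fin M → ℕ} (hsym : ∀ u v, χ u v = χ v u)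
    (hB : B3Coloring χ) : ∃ c, HasMonoCopy (kipas n) χ c := by
  obtain ⟨A, hA, hAc, hcross, hinA, hinAc⟩ := hB
  have hcard : #A + #Aᶜ = M := by simp
  rcases le_or_gt (n + 1) #A with hbig | hsmall
  · exact exists_hasMonoCopy_kipas_of_part hsym hn disjoint_compl_right hAc hcross hbig hinA
  · exact exists_hasMonoCopy_kipas_of_part hsym hn disjoint_compl_left hA
      (fun x hx y hy => (hsym x y).trans (hcross y hy x hx)) (by omega) hinAc

end UpperBound

section LowerBound

variable {V : Type*} [DecidableEq V] (A : Finset V)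

def splitColoring (u v : V) : ℕ :=
  if u ∈ A ∧ v ∈ A then 3 else if u ∉ A ∧ v ∉ A then 2 else 1

variable {A}

lemma splitColoring_comm (u v : V) : splitColoring A u v = splitColoring A v u := by
  unfold splitColoring; split_ifs <;> tauto

lemma splitColoring_eq_one_iff {u v : V} : splitColoring A u v = 1 ↔ (u ∈ A ↔ v ∉ A) := by
  unfold splitColoring; split_ifs <;> simp <;> tauto

lemma splitColoring_eq_two_iff {u v : V} : splitColoring A u v = 2 ↔ u ∉ A ∧ v ∉ A := by
  unfold splitColoring; split_ifs <;> simp <;> tauto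

lemma splitColoring_eq_three_iff {u v : V} : splitColoring A u v = 3 ↔ u ∈ A ∧ v ∈ A := by
  unfold splitColoring; split_ifs <;> simp <;> tauto

lemma splitColoring_eq_one_or_two_or_three (u v : V) :
    splitColoring A u v = 1 ∨ splitColoring A u v = 2 ∨ splitColoring A u v = 3 := by
  unfold splitColoring; split_ifs <;> simp

lemma b3Coloring_splitColoring {N : ℕ} {A : Finset (Fin N)} (hA : 2 ≤ #A) (hAc : 2 ≤ #Aᶜ) :
    B3Coloring (splitColoring A) := by
  refine ⟨A, hA, hAc, fun u hu v hv => ?_, fun u hu v hv _ => ?_, fun u hu v hv _ => ?_⟩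
  · exact splitColoring_eq_one_iff.mpr (by simp_all)
  · exact Or.inr (splitColoring_eq_three_iff.mpr ⟨hu, hv⟩)
  · exact Or.inr (splitColoring_eq_two_iff.mpr ⟨mem_compl.mp hu, mem_compl.mp hv⟩)

lemma not_hasMonoCopy_kipas_splitColoring [Fintype V] {n : ℕ} (hn : 2 ≤ n) (hA : #A ≤ n)
    (hAc : #Aᶜ ≤ n) (c : ℕ) : ¬ HasMonoCopy (kipas n) (splitColoring A) c := by
  rintro ⟨f, hf⟩
  have hside : ∀ {s : Finset V} {a : Fin (n + 1)},
      (∀ b, (kipas n).Adj a b → f a ∈ s) → f a ∈ s :=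
    fun h => (exists_kipas_adj (by omega) _).elim fun b hab => h b hab
  have hcard : ∀ s : Finset V, (∀ a, f a ∈ s) → n + 1 ≤ #s := fun s hs => by
    simpa using card_le_card_of_injOn (s := univ) f (fun a _ => hs a) f.injective.injOn
  let x : Fin (n + 1) := ⟨0, by omega⟩
  let y : Fin (n + 1) := ⟨1, by omega⟩
  have hxy := kipas_adj_zero_one hn
  have hxz : (kipas n).Adj x (Fin.last n) := kipas_adj_last ⟨0, by omega⟩
  have hyz : (kipas n).Adj y (Fin.last n) := kipas_adj_last ⟨1, by omega⟩
  rcases splitColoring_eq_one_or_two_or_three (A := A) (f x) (f (Fin.last n)) with h | h | h <;>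
    rw [hf _ _ hxz] at h <;> subst h
  · have := splitColoring_eq_one_iff.mp (hf _ _ hxy)
    have := splitColoring_eq_one_iff.mp (hf _ _ hxz)
    have := splitColoring_eq_one_iff.mp (hf _ _ hyz)
    tauto
  · have := hcard Aᶜ fun a => hside fun b hab =>
      mem_compl.mpr (splitColoring_eq_two_iff.mp (hf a b hab)).1
    omega
  · have := hcard A fun a => hside fun b hab => (splitColoring_eq_three_iff.mp (hf a b hab)).1
    omega

theorem exists_b3Coloring_not_hasMonoCopy_kipas {n : ℕ} (hn : 2 ≤ n) :
    ∃ χ : Fin (2 * n) → Fin (2 * n) → ℕ,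
      (∀ u v, χ u v = χ v u) ∧ B3Coloring χ ∧ ¬ ∃ c, HasMonoCopy (kipas n) χ c := by
  let A : Finset (Fin (2 * n)) := {v | v < n}
  have hA : #A = n := by simp [A, Fin.card_filter_val_lt]; omega
  have hAc : #Aᶜ = n := by rw [card_compl, hA, Fintype.card_fin]; omega
  exact ⟨splitColoring A, splitColoring_comm, b3Coloring_splitColoring (by omega) (by omega),
    fun ⟨c, hc⟩ => not_hasMonoCopy_kipas_splitColoring hn hA.le hAc.le c hc⟩

end LowerBound

/-- For `n ∈ {2, 3}`: every coloring of `K_{⌊5n/2⌋}` in `𝓑₃` contains a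
monochromatic kipas `K̂ₙ`; there is a coloring of `K_{⌊5n/2⌋ - 1}` in `𝓑₃` with no
monochromatic `K̂ₙ`; hence `b₃(K̂ₙ) = ⌊5n/2⌋`. -/
theorem b3_kipas_small (n : ℕ) (hn : n = 2 ∨ n = 3) :
    (∀ χ : Fin (5 * n / 2) → Fin (5 * n / 2) → ℕ,
      (∀ u v, χ u v = χ v u) → B3Coloring χ → ∃ c, HasMonoCopy (kipas n) χ c) ∧
    (∃ χ : Fin (5 * n / 2 - 1) → Fin (5 * n / 2 - 1) → ℕ,
      (∀ u v, χ u v = χ v u) ∧ B3Coloring χ ∧ ¬ ∃ c, HasMonoCopy (kipas n) χ c) ∧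
    IsLeast {N : ℕ | ∀ M, N ≤ M → ∀ χ : Fin M → Fin M → ℕ,
        (∀ u v, χ u v = χ v u) → B3Coloring χ →
        ∃ c, HasMonoCopy (kipas n) χ c} (5 * n / 2) := by
  have upper : ∀ M, 2 * n + 1 ≤ M → ∀ χ : Fin M → Fin M → ℕ,
      (∀ u v, χ u v = χ v u) → B3Coloring χ → ∃ c, HasMonoCopy (kipas n) χ c :=
    fun _ hM _ hsym hB => hB.exists_hasMonoCopy_kipas hn hM hsym
  obtain ⟨χ, hsym, hB, hfree⟩ := exists_b3Coloring_not_hasMonoCopy_kipas (n := n) (by omega)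
  rw [show 5 * n / 2 = 2 * n + 1 by omega, Nat.add_sub_cancel]
  refine ⟨upper _ le_rfl, ⟨χ, hsym, hB, hfree⟩, upper, fun N hN => ?_⟩
  by_contra! hlt
  exact hfree (hN (2 * n) (by omega) χ hsym hB)
end

section
/- Let N = n + ⌈m/2⌉ − 1 with 2 ≤ m ≤ n/2. Color the edges of K_N by partitioning the vertices into A with |A| = n and B with |B| = ⌈m/2⌉ − 1, coloring all edges within A red and all other edges blue. Then this coloring contains no red kipas K̂_n and no blue linear forest with at least m edges. -/
open SimpleGraph Finset

/-!
Every vertex of `K̂ₙ` lies on an edge, so a red copy would place its `n + 1` vertices inside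
the red set `A` of size `n`. Every blue edge meets the complement `B` of `A`, and each vertex of
a linear forest lies on at most two of its edges, so a blue linear forest has at most
`2 |B| = 2 (⌈m/2⌉ - 1) < m` edges.
-/

lemma kipas_exists_adj {n : ℕ} (hn : 0 < n) (a : Fin (n + 1)) : ∃ b, (kipas n).Adj a b := by
  by_cases ha : a.val < n
  · refine ⟨Fin.last n, ?_⟩
    simp only [kipas, fromRel_adj, Fin.val_last]
    exact ⟨fun h => by simp [h] at ha, Or.inl (Or.inr ⟨ha, trivial⟩)⟩
  · refine ⟨0, ?_⟩
    simp only [kipas, fromRel_adj, Fin.val_zero]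
    exact ⟨fun h => by simp [h] at ha; omega, Or.inr (Or.inr ⟨hn, by omega⟩)⟩

lemma card_le_of_hasMonoCopy {α V C : Type*} [Fintype α] {H : SimpleGraph α}
    {χ : V → V → C} {c : C} {A : Finset V} (hH : ∀ a, ∃ b, H.Adj a b)
    (hA : ∀ u v, χ u v = c → u ∈ A) (h : HasMonoCopy H χ c) : Fintype.card α ≤ A.card := by
  obtain ⟨f, hf⟩ := h
  refine Finset.card_le_card_of_injOn f (fun a _ => ?_) f.injective.injOn
  obtain ⟨b, hab⟩ := hH a
  exact hA _ _ (hf a b hab)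

lemma length_le_two_mul_countP_add_one {V : Type*} [DecidableEq V] (B : Finset V) :
    ∀ p : List V, p.IsChain (fun u v => u ∈ B ∨ v ∈ B) → p.length ≤ 2 * p.countP (· ∈ B) + 1
  | [], _ | [_], _ => by simp
  | a :: b :: rest, h => by
    obtain ⟨hab, hrest⟩ := List.isChain_cons_cons.mp h
    have ih₁ := length_le_two_mul_countP_add_one B rest hrest.tail
    have ih₂ := length_le_two_mul_countP_add_one B (b :: rest) hrest
    simp only [List.countP_cons, List.length_cons, decide_eq_true_eq] at ih₁ ih₂ ⊢
    by_cases ha : a ∈ B <;> by_cases hb : b ∈ B <;> simp_all <;> omega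

lemma List.Nodup.countP_mem_le_card {V : Type*} [DecidableEq V] {l : List V} (hl : l.Nodup)
    (B : Finset V) : l.countP (· ∈ B) ≤ B.card := by
  rw [List.countP_eq_length_filter, ← List.toFinset_card_of_nodup (hl.filter _)]
  exact Finset.card_le_card fun v hv =>
    of_decide_eq_true (List.mem_filter.mp (List.mem_toFinset.mp hv)).2

lemma le_two_mul_card_of_hasMonoLinearForest {V C : Type*} [DecidableEq V] {χ : V → V → C}
    {c : C} {t m : ℕ} (B : Finset V) (hB : ∀ u v, χ u v = c → u ∈ B ∨ v ∈ B)
    (h : HasMonoLinearForest χ c t m) : m ≤ 2 * B.card := by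
  obtain ⟨paths, hnodup, -, hchain, hm⟩ := h
  have hpath : ∀ p ∈ paths, p.length - 1 ≤ 2 * p.countP (· ∈ B) := fun p hp => by
    have := length_le_two_mul_countP_add_one B p ((hchain p hp).imp fun u v => hB u v)
    omega
  calc m ≤ (paths.map fun p => p.length - 1).sum := hm
    _ ≤ (paths.map fun p => 2 * p.countP (· ∈ B)).sum := List.sum_le_sum hpath
    _ = 2 * paths.flatten.countP (· ∈ B) := by
      rw [List.sum_map_mul_left, List.countP_flatten]
    _ ≤ 2 * B.card := Nat.mul_le_mul_left 2 (hnodup.countP_mem_le_card B)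

/-- For `2 ≤ m ≤ n/2` and `N = n + ⌈m/2⌉ - 1`, the coloring of `K_N` in which
the edges inside a fixed `n`-set `A` are red (`true`) and all other edges are blue (`false`)
contains no red kipas `K̂ₙ` and no blue linear forest with at least `m` edges. -/
theorem kipas_linearForest_lower_construction (n m : ℕ) (hm2 : 2 ≤ m) (hmn : 2 * m ≤ n)
    (A : Finset (Fin (n + (m + 1) / 2 - 1))) (hA : A.card = n)
    (χ : Fin (n + (m + 1) / 2 - 1) → Fin (n + (m + 1) / 2 - 1) → Bool)
    (hχ : ∀ u v, χ u v = true ↔ (u ∈ A ∧ v ∈ A)) :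
    ¬ HasMonoCopy (kipas n) χ true ∧ ¬ HasMonoLinearForest χ false 2 m := by
  constructor
  · intro h
    have := card_le_of_hasMonoCopy (kipas_exists_adj (by omega))
      (fun u v huv => ((hχ u v).mp huv).1) h
    simp only [Fintype.card_fin, hA] at this
    omega
  · intro h
    have hcover : ∀ u v, χ u v = false → u ∈ Aᶜ ∨ v ∈ Aᶜ := fun u v huv => by
      simp only [Finset.mem_compl, ← not_and_or, ← hχ, huv]
      decide
    have := le_two_mul_card_of_hasMonoLinearForest Aᶜ hcover h
    rw [Finset.card_compl, Fintype.card_fin, hA] at this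
    omega
end
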